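/- Let N ≥ 1 and let P be the irreducible birth-and-death stochastic matrix on I = {0,1,…,N} with parameters p_x = P(x,x+1), q_x = P(x,x−1), r_x = P(x,x), where p_x + q_x + r_x = 1, q_0 = 0 = p_N, p_x > 0 for all x < N, q_x > 0 for all x ≥ 1, and P(x,y) = 0 when |x−y| > 1. Assume P is monotone: p_x + q_{x+1} ≤ 1 for all x < N. Let π be the stationary distribution of P and π^c(x) = Σ_{y≤x} π(y). Then: (a) the Siegmund dual P̂ (defined by H_S·P̂ᵀ = P·H_S with H_S(x,y) = 1 if x ≤ y, 0 otherwise) is the birth-and-death kernel with P̂(x,x−1) = p_x, P̂(x,x) = 1 − p_x − q_{x+1}, P̂(x,x+1) = q_{x+1} (with the convention q_{N+1} = 0), and all other entries 0; its row sums equal 1 except at x = 0 where the row sum is 1 − p_0 < 1, and N is an absorbing state of P̂; (b) the matrix P̃ defined by P̃(x,x−1) = p_x·π^c(x−1)/π^c(x), P̃(x,x) = 1 − (p_x + q_{x+1}), P̃(x,x+1) = q_{x+1}·π^c(x+1)/π^c(x), and all other entries 0, is stochastic and satisfies P̃·Λ = Λ·P, where Λ(x,y) = π(y)/π^c(x)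 if y ≤ x and 0 otherwise. -/

import Mathlib

/-!
Write `H x y = [x ≤ y]`. For the birth-and-death kernel `P`, both `P H` and `H P̂ᵀ` have entry
`1`, `1 - p x`, `q x` or `0` according as `x < y`, `x = y`, `x = y + 1` or `x > y + 1`: this is
Siegmund duality. With `D = diag π^c`, `P̃ = D⁻¹ P̂ D` is a Doob transform and
`Λ = D⁻¹ Hᵀ diag π`. Duality and stationarity make `π^c = π H` harmonic for `P̂`, so `P̃` is
stochastic, and `P̃ Λ = D⁻¹ (P H)ᵀ diag π = D⁻¹ Hᵀ Pᵀ diag π = D⁻¹ Hᵀ diag π P = Λ P` by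
reversibility of `P`. Reversibility is detailed balance, obtained by applying stationarity to
`π H`: the flux of `π` across the cut between `x` and `x + 1` vanishes.
-/

open Matrix Finset

section HTransform

lemma mulVec_vecMul_eq_of_dual {n R : Type*} [Fintype n] [CommSemiring R]
    {P Q H : Matrix n n R} {π : n → R} (hdual : H * Qᵀ = P * H) (hπ : π ᵥ* P = π) :
    Q *ᵥ (π ᵥ* H) = π ᵥ* H := by
  have hQ : Q * Hᵀ = Hᵀ * Pᵀ := by simpa [transpose_mul] using congrArg transpose hdual
  rw [← mulVec_transpose, mulVec_mulVec, hQ, ← mulVec_mulVec, mulVec_transpose P, hπ,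
    mulVec_transpose]

variable {n K : Type*} [Fintype n] [DecidableEq n] [Field K]

def hTransform (Q : Matrix n n K) (w : n → K) : Matrix n n K :=
  diagonal w⁻¹ * Q * diagonal w

lemma hTransform_apply (Q : Matrix n n K) (w : n → K) (x y : n) :
    hTransform Q w x y = (w x)⁻¹ * Q x y * w y := by
  simp [hTransform, diagonal_mul, mul_diagonal]

lemma sum_hTransform_apply {Q : Matrix n n K} {w : n → K} (hQw : Q *ᵥ w = w) {x : n}
    (hx : w x ≠ 0) : ∑ y, hTransform Q w x y = 1 := by
  have hrow : ∑ y, Q x y * w y = w x := congrFun hQw x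
  simp_rw [hTransform_apply, mul_assoc, ← mul_sum, hrow, inv_mul_cancel₀ hx]

lemma hTransform_nonneg [LinearOrder K] [IsStrictOrderedRing K] {Q : Matrix n n K} {w : n → K}
    (hQ : ∀ x y, 0 ≤ Q x y) (hw : ∀ x, 0 < w x) (x y : n) : 0 ≤ hTransform Q w x y := by
  rw [hTransform_apply]
  exact mul_nonneg (mul_nonneg (inv_nonneg.2 (hw x).le) (hQ x y)) (hw y).le

lemma hTransform_mul_eq_mul {P Q H : Matrix n n K} {π w : n → K} (hw : ∀ x, w x ≠ 0)
    (hdual : H * Qᵀ = P * H) (hrev : diagonal π * P = Pᵀ * diagonal π) :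
    hTransform Q w * (diagonal w⁻¹ * Hᵀ * diagonal π) = diagonal w⁻¹ * Hᵀ * diagonal π * P := by
  have hQ : Q * Hᵀ = Hᵀ * Pᵀ := by simpa [transpose_mul] using congrArg transpose hdual
  have hww : diagonal w * diagonal w⁻¹ = 1 := by
    rw [diagonal_mul_diagonal, ← diagonal_one]
    congr 1
    funext x
    exact mul_inv_cancel₀ (hw x)
  calc hTransform Q w * (diagonal w⁻¹ * Hᵀ * diagonal π)
      = diagonal w⁻¹ * (Q * (diagonal w * diagonal w⁻¹) * Hᵀ) * diagonal π := by
        simp only [hTransform, Matrix.mul_assoc]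
    _ = diagonal w⁻¹ * Hᵀ * (Pᵀ * diagonal π) := by
        rw [hww, Matrix.mul_one, hQ]; simp only [Matrix.mul_assoc]
    _ = diagonal w⁻¹ * Hᵀ * diagonal π * P := by
        rw [← hrev]; simp only [Matrix.mul_assoc]

end HTransform

namespace Fin

variable {M : Type*} [AddCommMonoid M] {N : ℕ}

lemma val_sub_one_of_pos {x : Fin (N+1)} (hx : 0 < (x : ℕ)) :
    ((x - 1 : Fin (N+1)) : ℕ) = x - 1 :=
  val_sub_one_of_ne_zero (Fin.pos_iff_ne_zero.mp hx)

lemma val_add_one_of_val_lt {x : Fin (N+1)} (hx : (x : ℕ) < N) :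
    ((x + 1 : Fin (N+1)) : ℕ) = x + 1 :=
  val_add_one_of_lt (by simpa [Fin.lt_def] using hx)

lemma sum_ite_val_add_one_eq (f : Fin (N+1) → M) (x : Fin (N+1)) :
    ∑ z : Fin (N+1), (if (z : ℕ) + 1 = x then f z else 0)
      = if 0 < (x : ℕ) then f (x - 1) else 0 := by
  split_ifs with hx
  · rw [Finset.sum_eq_single (x - 1)]
    · rw [if_pos (by rw [val_sub_one_of_pos hx]; omega)]
    · intro z _ hz
      exact if_neg fun h => hz (Fin.ext (by rw [val_sub_one_of_pos hx]; omega))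
    · simp
  · exact Finset.sum_eq_zero fun z _ => if_neg (by omega)

lemma sum_ite_val_eq_add_one (f : Fin (N+1) → M) (x : Fin (N+1)) :
    ∑ z : Fin (N+1), (if (z : ℕ) = x + 1 then f z else 0)
      = if (x : ℕ) < N then f (x + 1) else 0 := by
  split_ifs with hx
  · rw [Finset.sum_eq_single (x + 1)]
    · rw [if_pos (val_add_one_of_val_lt hx)]
    · intro z _ hz
      exact if_neg fun h => hz (Fin.ext (by rw [val_add_one_of_val_lt hx]; omega))
    · simp
  · exact Finset.sum_eq_zero fun z _ => if_neg (by omega)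

lemma sum_eq_of_band (g : Fin (N+1) → M) (x : Fin (N+1))
    (hg : ∀ z : Fin (N+1), (z : ℕ) + 1 < x ∨ (x : ℕ) + 1 < z → g z = 0) :
    ∑ z, g z = (if 0 < (x : ℕ) then g (x - 1) else 0) + g x
      + (if (x : ℕ) < N then g (x + 1) else 0) := by
  have hsplit : ∀ z, g z = (if (z : ℕ) + 1 = x then g z else 0) + (if x = z then g z else 0)
      + (if (z : ℕ) = x + 1 then g z else 0) := by
    intro z
    by_cases hxz : x = z
    · subst hxz
      simp
    · have hxz' : (x : ℕ) ≠ z := fun h => hxz (Fin.ext h)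
      rw [if_neg hxz, add_zero]
      split_ifs <;> (try simp only [add_zero, zero_add]) <;> first | omega | exact hg z (by omega)
  rw [Finset.sum_congr rfl fun z _ => hsplit z, sum_add_distrib, sum_add_distrib,
    sum_ite_val_add_one_eq, sum_ite_eq, sum_ite_val_eq_add_one, if_pos (mem_univ x)]

end Fin

section BirthDeath

variable {N : ℕ}

def birthDeath (a b c : Fin (N+1) → ℝ) : Matrix (Fin (N+1)) (Fin (N+1)) ℝ :=
  of fun x y =>
    if (y : ℕ) + 1 = x then a x else if y = x then b x else if (y : ℕ) = x + 1 then c x else 0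

lemma birthDeath_apply_of_far {a b c : Fin (N+1) → ℝ} {x y : Fin (N+1)}
    (h : (y : ℕ) + 1 < x ∨ (x : ℕ) + 1 < y) : birthDeath a b c x y = 0 := by
  have hyx : y ≠ x := by rintro rfl; omega
  simp only [birthDeath, of_apply]
  rw [if_neg (by omega), if_neg hyx, if_neg (by omega)]

lemma birthDeath_apply_sub_one (a b c : Fin (N+1) → ℝ) {x : Fin (N+1)} (hx : 0 < (x : ℕ)) :
    birthDeath a b c x (x - 1) = a x := by
  simp only [birthDeath, of_apply]
  rw [if_pos (by rw [Fin.val_sub_one_of_pos hx]; omega)]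

lemma birthDeath_apply_self (a b c : Fin (N+1) → ℝ) (x : Fin (N+1)) :
    birthDeath a b c x x = b x := by
  simp [birthDeath]

lemma birthDeath_apply_add_one (a b c : Fin (N+1) → ℝ) {x : Fin (N+1)} (hx : (x : ℕ) < N) :
    birthDeath a b c x (x + 1) = c x := by
  have hv := Fin.val_add_one_of_val_lt hx
  simp only [birthDeath, of_apply]
  rw [if_neg (by omega), if_neg (fun h => by rw [← Fin.val_inj, hv] at h; omega), if_pos hv]

lemma birthDeath_apply_add_one_self (a b c : Fin (N+1) → ℝ) {x : Fin (N+1)} (hx : (x : ℕ) < N) :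
    birthDeath a b c (x + 1) x = a (x + 1) := by
  simp only [birthDeath, of_apply]
  rw [if_pos (Fin.val_add_one_of_val_lt hx).symm]

lemma eq_birthDeath {P : Matrix (Fin (N+1)) (Fin (N+1)) ℝ} {p q r : Fin (N+1) → ℝ}
    (htri : ∀ x y : Fin (N+1), ((x : ℕ) + 1 < (y : ℕ) ∨ (y : ℕ) + 1 < (x : ℕ)) → P x y = 0)
    (hup : ∀ x : Fin (N+1), (x : ℕ) < N → P x (x + 1) = p x)
    (hdown : ∀ x : Fin (N+1), 0 < (x : ℕ) → P x (x - 1) = q x)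
    (hdiag : ∀ x, P x x = r x) : P = birthDeath q r p := by
  ext x y
  by_cases hyx : y = x
  · rw [hyx, hdiag, birthDeath_apply_self]
  by_cases hdown' : (y : ℕ) + 1 = x
  · obtain rfl : y = x - 1 := Fin.ext (by rw [Fin.val_sub_one_of_pos (by omega)]; omega)
    rw [hdown x (by omega), birthDeath_apply_sub_one _ _ _ (by omega)]
  by_cases hup' : (x : ℕ) + 1 = y
  · have hx : (x : ℕ) < N := by omega
    obtain rfl : y = x + 1 := Fin.ext (by rw [Fin.val_add_one_of_val_lt hx]; omega)
    rw [hup x hx, birthDeath_apply_add_one _ _ _ hx]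
  have hyx' : (y : ℕ) ≠ x := fun h => hyx (Fin.ext h)
  rw [htri x y (by omega), birthDeath_apply_of_far (by omega)]

lemma sum_birthDeath_mul (a b c : Fin (N+1) → ℝ) (f : ℕ → ℝ) (x : Fin (N+1)) :
    ∑ z, birthDeath a b c x z * f z = (if 0 < (x : ℕ) then a x * f (x - 1) else 0)
      + b x * f x + (if (x : ℕ) < N then c x * f (x + 1) else 0) := by
  rw [Fin.sum_eq_of_band _ x fun z hz => by rw [birthDeath_apply_of_far (by omega), zero_mul]]
  split_ifs with h₀ h₁ <;>
    simp only [birthDeath_apply_sub_one, birthDeath_apply_add_one, birthDeath_apply_self,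
      Fin.val_sub_one_of_pos, Fin.val_add_one_of_val_lt, *]

def siegmundKernel (N : ℕ) : Matrix (Fin (N+1)) (Fin (N+1)) ℝ :=
  of fun x y => if x ≤ y then 1 else 0

lemma siegmundKernel_apply (x y : Fin (N+1)) :
    siegmundKernel N x y = if (x : ℕ) ≤ y then 1 else 0 := by
  simp only [siegmundKernel, of_apply, Fin.le_def]

/-- `q (x + 1)`, set to `0` at `x = N`, where `x + 1` wraps around to `0` in `Fin (N+1)`. -/
def nextRate (q : Fin (N+1) → ℝ) (x : Fin (N+1)) : ℝ :=
  if (x : ℕ) < N then q (x + 1) else 0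

def siegmundDual (p q : Fin (N+1) → ℝ) : Matrix (Fin (N+1)) (Fin (N+1)) ℝ :=
  birthDeath p (fun x => 1 - p x - nextRate q x) (nextRate q)

def birthDeathCdf (p q : Fin (N+1) → ℝ) : Matrix (Fin (N+1)) (Fin (N+1)) ℝ :=
  of fun x y =>
    if (x : ℕ) < y then 1 else if x = y then 1 - p x else if (x : ℕ) = y + 1 then q x else 0

lemma birthDeath_mul_siegmundKernel {p q r : Fin (N+1) → ℝ} (hsum : ∀ x, p x + q x + r x = 1)
    (hq0 : q 0 = 0) : birthDeath q r p * siegmundKernel N = birthDeathCdf p q := by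
  ext x y
  have hx := hsum x
  simp only [mul_apply, siegmundKernel_apply]
  rw [sum_birthDeath_mul q r p (fun k => if k ≤ y then 1 else 0)]
  simp only [birthDeathCdf, of_apply]
  rcases Nat.eq_zero_or_pos x with h₀ | h₀
  · obtain rfl : x = 0 := Fin.ext h₀
    rw [hq0] at hx
    split_ifs <;> first | omega | linarith
  · split_ifs <;> first | omega | linarith

lemma siegmundKernel_mul_siegmundDual_transpose (p q : Fin (N+1) → ℝ) :
    siegmundKernel N * (siegmundDual p q)ᵀ = birthDeathCdf p q := by
  ext x y
  simp only [mul_apply, transpose_apply, siegmundKernel_apply, mul_comm (ite _ _ _)]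
  rw [siegmundDual, sum_birthDeath_mul _ _ _ (fun k => if (x : ℕ) ≤ k then 1 else 0)]
  simp only [birthDeathCdf, nextRate, of_apply]
  by_cases hxy : x = y
  · subst hxy
    split_ifs <;> first | omega | ring
  have hxy' : (x : ℕ) ≠ y := fun h => hxy (Fin.ext h)
  by_cases hsucc : (x : ℕ) = y + 1
  · have hy : (y : ℕ) < N := by omega
    have hv := Fin.val_add_one_of_val_lt hy
    obtain rfl : x = y + 1 := Fin.ext (by rw [hv, hsucc])
    split_ifs <;> first | omega | ring
  · split_ifs <;> first | omega | ring

lemma birthDeath_detailedBalance {p q r π : Fin (N+1) → ℝ} (hsum : ∀ x, p x + q x + r x = 1)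
    (hq0 : q 0 = 0) (hπ : π ᵥ* birthDeath q r p = π) {x : Fin (N+1)} (hx : (x : ℕ) < N) :
    π x * p x = π (x + 1) * q (x + 1) := by
  have hcut : π ᵥ* birthDeathCdf p q = π ᵥ* siegmundKernel N := by
    rw [← birthDeath_mul_siegmundKernel hsum hq0, ← vecMul_vecMul, hπ]
  have hjump : ∀ z, birthDeathCdf p q z x - siegmundKernel N z x
      = (if (z : ℕ) = x + 1 then q z else 0) - (if x = z then p x else 0) := by
    intro z
    simp only [birthDeathCdf, of_apply, siegmundKernel_apply]
    by_cases hxz : x = z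
    · subst hxz; simp
    · have hxz' : (x : ℕ) ≠ z := fun h => hxz (Fin.ext h)
      split_ifs <;> first | omega | simp_all
  have hflux := sub_eq_zero.2 (congrFun hcut x)
  rw [vecMul, vecMul, dotProduct, dotProduct, ← sum_sub_distrib] at hflux
  simp_rw [← mul_sub, hjump, mul_sub, mul_ite, mul_zero, sum_sub_distrib,
    Fin.sum_ite_val_eq_add_one, sum_ite_eq, if_pos (mem_univ x), if_pos hx] at hflux
  linarith

lemma diagonal_mul_birthDeath {a b c π : Fin (N+1) → ℝ}
    (hdb : ∀ x : Fin (N+1), (x : ℕ) < N → π x * c x = π (x + 1) * a (x + 1)) :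
    diagonal π * birthDeath a b c = (birthDeath a b c)ᵀ * diagonal π := by
  ext x y
  rw [diagonal_mul, mul_diagonal, transpose_apply]
  by_cases hxy : y = x
  · rw [hxy, mul_comm]
  have hxy' : (y : ℕ) ≠ x := fun h => hxy (Fin.ext h)
  by_cases hdown : (y : ℕ) + 1 = x
  · have hy : (y : ℕ) < N := by omega
    obtain rfl : x = y + 1 := Fin.ext (by rw [Fin.val_add_one_of_val_lt hy, hdown])
    rw [birthDeath_apply_add_one_self _ _ _ hy, birthDeath_apply_add_one _ _ _ hy]
    linarith [hdb y hy]
  by_cases hup : (x : ℕ) + 1 = y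
  · have hx : (x : ℕ) < N := by omega
    obtain rfl : y = x + 1 := Fin.ext (by rw [Fin.val_add_one_of_val_lt hx, hup])
    rw [birthDeath_apply_add_one_self _ _ _ hx, birthDeath_apply_add_one _ _ _ hx]
    linarith [hdb x hx]
  rw [birthDeath_apply_of_far (by omega), birthDeath_apply_of_far (by omega), mul_zero, zero_mul]

lemma sum_siegmundDual_apply (p q : Fin (N+1) → ℝ) (x : Fin (N+1)) :
    ∑ y, siegmundDual p q x y = if (x : ℕ) = 0 then 1 - p x else 1 := by
  have hrow := sum_birthDeath_mul p (fun x => 1 - p x - nextRate q x) (nextRate q) (fun _ => 1) x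
  simp only [mul_one] at hrow
  rw [siegmundDual, hrow, nextRate]
  split_ifs <;> first | omega | ring

lemma siegmundDual_last_apply (p q : Fin (N+1) → ℝ) (hpN : p (Fin.last N) = 0) (y : Fin (N+1)) :
    siegmundDual p q (Fin.last N) y = if y = Fin.last N then 1 else 0 := by
  have hy : (y : ℕ) = N ↔ y = Fin.last N := by rw [Fin.ext_iff, Fin.val_last]
  simp only [siegmundDual, birthDeath, nextRate, of_apply, Fin.val_last, hpN]
  split_ifs <;> first | omega | ring

lemma birthDeath_nonneg {a b c : Fin (N+1) → ℝ} (ha : ∀ x, 0 ≤ a x) (hb : ∀ x, 0 ≤ b x)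
    (hc : ∀ x, 0 ≤ c x) (x y : Fin (N+1)) : 0 ≤ birthDeath a b c x y := by
  simp only [birthDeath, of_apply]
  split_ifs
  exacts [ha x, hb x, hc x, le_rfl]

lemma siegmundDual_nonneg {p q : Fin (N+1) → ℝ} (hpN : p (Fin.last N) = 0)
    (hp : ∀ x : Fin (N+1), (x : ℕ) < N → 0 ≤ p x) (hq : ∀ x : Fin (N+1), 0 < (x : ℕ) → 0 ≤ q x)
    (hmono : ∀ x : Fin (N+1), (x : ℕ) < N → p x + q (x + 1) ≤ 1) (x y : Fin (N+1)) :
    0 ≤ siegmundDual p q x y := by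
  refine birthDeath_nonneg (fun x => ?_) (fun x => ?_) (fun x => ?_) x y
  · by_cases hx : (x : ℕ) < N
    · exact hp x hx
    · rw [Fin.eq_last_of_not_lt hx, hpN]
  all_goals unfold nextRate; split_ifs with hx
  · linarith [hmono x hx]
  · rw [Fin.eq_last_of_not_lt hx, hpN, sub_zero, sub_zero]
    exact zero_le_one
  · exact hq _ (by rw [Fin.val_add_one_of_val_lt hx]; omega)
  · exact le_rfl

lemma vecMul_siegmundKernel (π : Fin (N+1) → ℝ) :
    π ᵥ* siegmundKernel N = fun x => ∑ y ∈ Iic x, π y := by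
  funext x
  simp only [vecMul, dotProduct, siegmundKernel, of_apply, mul_ite, mul_one, mul_zero]
  rw [← sum_filter]
  congr 1
  ext y
  simp

lemma hTransform_birthDeath (a b c w : Fin (N+1) → ℝ) (hw : ∀ x, w x ≠ 0) :
    hTransform (birthDeath a b c) w = of fun x y : Fin (N+1) =>
      if (y : ℕ) + 1 = x then a x * w y / w x else if y = x then b x
      else if (y : ℕ) = x + 1 then c x * w y / w x else 0 := by
  ext x y
  rw [hTransform_apply]
  simp only [birthDeath, of_apply]
  split_ifs with h₁ h₂
  · field_simp
  · subst h₂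
    have := hw y
    field_simp
  · field_simp
  · ring

lemma hTransform_siegmundDual (p q w : Fin (N+1) → ℝ) (hw : ∀ x, w x ≠ 0) :
    hTransform (siegmundDual p q) w = of fun x y : Fin (N+1) =>
      if (y : ℕ) + 1 = x then p x * w y / w x else if y = x then 1 - (p x + nextRate q x)
      else if (y : ℕ) = x + 1 then nextRate q x * w y / w x else 0 := by
  simp only [siegmundDual, hTransform_birthDeath _ _ _ _ hw, sub_sub]

lemma diagonal_inv_mul_siegmundKernel_transpose_mul_diagonal (π w : Fin (N+1) → ℝ) :
    diagonal w⁻¹ * (siegmundKernel N)ᵀ * diagonal π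
      = of fun x y => if y ≤ x then π y / w x else 0 := by
  ext x y
  simp only [siegmundKernel, diagonal_mul, mul_diagonal, transpose_apply, of_apply, Pi.inv_apply]
  split_ifs
  · field_simp
  · simp

end BirthDeath

theorem stmt11_general (N : ℕ) (hN : 1 ≤ N) (P : Matrix (Fin (N+1)) (Fin (N+1)) ℝ)
    (p q r : Fin (N+1) → ℝ) (π : Fin (N+1) → ℝ)
    (htri : ∀ x y : Fin (N+1), ((x : ℕ) + 1 < (y : ℕ) ∨ (y : ℕ) + 1 < (x : ℕ)) → P x y = 0)
    (hup : ∀ x : Fin (N+1), (x : ℕ) < N → P x (x + 1) = p x)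
    (hdown : ∀ x : Fin (N+1), 0 < (x : ℕ) → P x (x - 1) = q x)
    (hdiag : ∀ x, P x x = r x)
    (hsum : ∀ x, p x + q x + r x = 1)
    (hq0 : q 0 = 0) (hpN : p (Fin.last N) = 0)
    (hppos : ∀ x : Fin (N+1), (x : ℕ) < N → 0 < p x)
    (hqpos : ∀ x : Fin (N+1), 0 < (x : ℕ) → 0 < q x)
    (hmono : ∀ x : Fin (N+1), (x : ℕ) < N → p x + q (x + 1) ≤ 1)
    (hπpos : ∀ x, 0 < π x)
    (hπP : ∀ y, ∑ x, π x * P x y = π y) :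
    let qq : Fin (N+1) → ℝ := fun x => if (x : ℕ) < N then q (x + 1) else 0
    let HS : Matrix (Fin (N+1)) (Fin (N+1)) ℝ :=
      Matrix.of fun x y => if x ≤ y then 1 else 0
    let Phat : Matrix (Fin (N+1)) (Fin (N+1)) ℝ :=
      Matrix.of fun x y =>
        if (y : ℕ) + 1 = (x : ℕ) then p x
        else if y = x then 1 - p x - qq x
        else if (y : ℕ) = (x : ℕ) + 1 then qq x
        else 0
    let πc : Fin (N+1) → ℝ := fun x => ∑ y ∈ Finset.Iic x, π y
    let Λ : Matrix (Fin (N+1)) (Fin (N+1)) ℝ :=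
      Matrix.of fun x y => if y ≤ x then π y / πc x else 0
    let Ptil : Matrix (Fin (N+1)) (Fin (N+1)) ℝ :=
      Matrix.of fun x y =>
        if (y : ℕ) + 1 = (x : ℕ) then p x * πc y / πc x
        else if y = x then 1 - (p x + qq x)
        else if (y : ℕ) = (x : ℕ) + 1 then qq x * πc y / πc x
        else 0
    (HS * Phatᵀ = P * HS ∧
      (∀ x : Fin (N+1), x ≠ 0 → ∑ y, Phat x y = 1) ∧
      (∑ y, Phat 0 y = 1 - p 0 ∧ 1 - p 0 < 1) ∧
      (∀ y, Phat (Fin.last N) y = if y = Fin.last N then 1 else 0)) ∧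
    ((∀ x y, 0 ≤ Ptil x y) ∧ (∀ x, ∑ y, Ptil x y = 1) ∧
      Ptil * Λ = Λ * P) := by
  intro qq HS Phat πc Λ Ptil
  have hP : P = birthDeath q r p := eq_birthDeath htri hup hdown hdiag
  have hπ : π ᵥ* P = π := funext hπP
  have hdual : HS * Phatᵀ = P * HS := by
    rw [hP]
    exact (siegmundKernel_mul_siegmundDual_transpose p q).trans
      (birthDeath_mul_siegmundKernel hsum hq0).symm
  have hrev : diagonal π * P = Pᵀ * diagonal π := by
    rw [hP]
    exact diagonal_mul_birthDeath fun x hx => birthDeath_detailedBalance hsum hq0 (hP ▸ hπ) hx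
  have hπc_pos : ∀ x, 0 < πc x := fun x => sum_pos (fun y _ => hπpos y) ⟨x, mem_Iic.2 le_rfl⟩
  have hπc_ne : ∀ x, πc x ≠ 0 := fun x => (hπc_pos x).ne'
  have hπc : πc = π ᵥ* HS := (vecMul_siegmundKernel π).symm
  have hharm : Phat *ᵥ πc = πc := hπc ▸ mulVec_vecMul_eq_of_dual hdual hπ
  have hPtil : Ptil = hTransform Phat πc := (hTransform_siegmundDual p q πc hπc_ne).symm
  have hΛ : Λ = diagonal πc⁻¹ * HSᵀ * diagonal π :=
    (diagonal_inv_mul_siegmundKernel_transpose_mul_diagonal π πc).symm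
  refine ⟨⟨hdual, fun x hx => ?_, ⟨?_, ?_⟩, siegmundDual_last_apply p q hpN⟩,
    fun x y => ?_, fun x => ?_, ?_⟩
  · exact (sum_siegmundDual_apply p q x).trans (if_neg (Fin.val_ne_zero_iff.mpr hx))
  · exact (sum_siegmundDual_apply p q 0).trans (if_pos rfl)
  · linarith [hppos 0 hN]
  · rw [hPtil]
    exact hTransform_nonneg (siegmundDual_nonneg hpN (fun x hx => (hppos x hx).le)
      (fun x hx => (hqpos x hx).le) hmono) hπc_pos x y
  · rw [hPtil]
    exact sum_hTransform_apply hharm (hπc_ne x)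
  · rw [hPtil, hΛ]
    exact hTransform_mul_eq_mul hπc_ne hdual hrev

/-- Corollary coro31: for a monotone irreducible birth-and-death stochastic kernel `P`
with parameters `p, q, r` and stationary distribution `π`:
(a) the Siegmund dual `P̂` is the displayed birth-and-death kernel, its row sums are `1`
except at `0` where the row sum is `1 − p₀ < 1`, and `N` is absorbing for `P̂`;
(b) the displayed `P̃` is stochastic and `P̃·Λ = Λ·P`. -/
theorem stmt11 (N : ℕ) (hN : 1 ≤ N) (P : Matrix (Fin (N+1)) (Fin (N+1)) ℝ)
    (p q r : Fin (N+1) → ℝ) (π : Fin (N+1) → ℝ)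
    (hP0 : ∀ x y, 0 ≤ P x y) (hP1 : ∀ x, ∑ y, P x y = 1)
    (htri : ∀ x y : Fin (N+1), ((x : ℕ) + 1 < (y : ℕ) ∨ (y : ℕ) + 1 < (x : ℕ)) → P x y = 0)
    (hup : ∀ x : Fin (N+1), (x : ℕ) < N → P x (x + 1) = p x)
    (hdown : ∀ x : Fin (N+1), 0 < (x : ℕ) → P x (x - 1) = q x)
    (hdiag : ∀ x, P x x = r x)
    (hsum : ∀ x, p x + q x + r x = 1)
    (hq0 : q 0 = 0) (hpN : p (Fin.last N) = 0)
    (hppos : ∀ x : Fin (N+1), (x : ℕ) < N → 0 < p x)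
    (hqpos : ∀ x : Fin (N+1), 0 < (x : ℕ) → 0 < q x)
    (hmono : ∀ x : Fin (N+1), (x : ℕ) < N → p x + q (x + 1) ≤ 1)
    (hπpos : ∀ x, 0 < π x) (hπ1 : ∑ x, π x = 1)
    (hπP : ∀ y, ∑ x, π x * P x y = π y) :
    let qq : Fin (N+1) → ℝ := fun x => if (x : ℕ) < N then q (x + 1) else 0
    let HS : Matrix (Fin (N+1)) (Fin (N+1)) ℝ :=
      Matrix.of fun x y => if x ≤ y then 1 else 0
    let Phat : Matrix (Fin (N+1)) (Fin (N+1)) ℝ :=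
      Matrix.of fun x y =>
        if (y : ℕ) + 1 = (x : ℕ) then p x
        else if y = x then 1 - p x - qq x
        else if (y : ℕ) = (x : ℕ) + 1 then qq x
        else 0
    let πc : Fin (N+1) → ℝ := fun x => ∑ y ∈ Finset.Iic x, π y
    let Λ : Matrix (Fin (N+1)) (Fin (N+1)) ℝ :=
      Matrix.of fun x y => if y ≤ x then π y / πc x else 0
    let Ptil : Matrix (Fin (N+1)) (Fin (N+1)) ℝ :=
      Matrix.of fun x y =>
        if (y : ℕ) + 1 = (x : ℕ) then p x * πc y / πc x
        else if y = x then 1 - (p x + qq x)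
        else if (y : ℕ) = (x : ℕ) + 1 then qq x * πc y / πc x
        else 0
    (HS * Phatᵀ = P * HS ∧
      (∀ x : Fin (N+1), x ≠ 0 → ∑ y, Phat x y = 1) ∧
      (∑ y, Phat 0 y = 1 - p 0 ∧ 1 - p 0 < 1) ∧
      (∀ y, Phat (Fin.last N) y = if y = Fin.last N then 1 else 0)) ∧
    ((∀ x y, 0 ≤ Ptil x y) ∧ (∀ x, ∑ y, Ptil x y = 1) ∧
      Ptil * Λ = Λ * P) :=
  stmt11_general N hN P p q r π htri hup hdown hdiag hsum hq0 hpN hppos hqpos hmono hπpos hπP
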